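/- For the asymmetric pair c_A = A says ((B says b) → a) and c_B = B says ((A says a) ↠ b), it holds that c_A ∧ c_B ⊢ (A says a) ∧ (B says b). -/

import Mathlib

/-- Formulae of the contract logic PCL: intuitionistic propositional logic
extended with contractual implication ↠ and an indexed lax modality `says`. -/
inductive PCL (P At : Type) where
  | atom : At → PCL P At
  | top : PCL P At
  | bot : PCL P At
  | and : PCL P At → PCL P At → PCL P At
  | or : PCL P At → PCL P At → PCL P At
  | imp : PCL P At → PCL P At → PCL P At
  | cimp : PCL P At → PCL P At → PCL P At
  | says : P → PCL P At → PCL P At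

/-- Hilbert-style provability for PCL: intuitionistic propositional axioms,
modus ponens, the contractual-implication axioms
⊤↠⊤, (φ↠φ)→φ, (φ'→φ)→(φ↠ψ)→(ψ→ψ')→(φ'↠ψ'),
and the lax `says` axioms. -/
inductive Prov {P At : Type} (Γ : Set (PCL P At)) : PCL P At → Prop where
  | ax {φ} : φ ∈ Γ → Prov Γ φ
  | mp {φ ψ} : Prov Γ (.imp φ ψ) → Prov Γ φ → Prov Γ ψ
  | k (φ ψ) : Prov Γ (.imp φ (.imp ψ φ))
  | s (φ ψ χ) : Prov Γ (.imp (.imp φ (.imp ψ χ)) (.imp (.imp φ ψ) (.imp φ χ)))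
  | andI (φ ψ) : Prov Γ (.imp φ (.imp ψ (.and φ ψ)))
  | andE1 (φ ψ) : Prov Γ (.imp (.and φ ψ) φ)
  | andE2 (φ ψ) : Prov Γ (.imp (.and φ ψ) ψ)
  | orI1 (φ ψ) : Prov Γ (.imp φ (.or φ ψ))
  | orI2 (φ ψ) : Prov Γ (.imp ψ (.or φ ψ))
  | orE (φ ψ χ) : Prov Γ (.imp (.imp φ χ) (.imp (.imp ψ χ) (.imp (.or φ ψ) χ)))
  | topI : Prov Γ .top
  | botE (φ) : Prov Γ (.imp .bot φ)
  | ctop : Prov Γ (.cimp .top .top)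
  | cfix (φ) : Prov Γ (.imp (.cimp φ φ) φ)
  | cmono (φ φ' ψ ψ') :
      Prov Γ (.imp (.imp φ' φ) (.imp (.cimp φ ψ) (.imp (.imp ψ ψ') (.cimp φ' ψ'))))
  | saysI (A φ) : Prov Γ (.imp φ (.says A φ))
  | saysIdem (A φ) : Prov Γ (.imp (.says A (.says A φ)) (.says A φ))
  | saysMono (A φ ψ) : Prov Γ (.imp (.imp φ ψ) (.imp (.says A φ) (.says A ψ)))

/-
In an intuitionistic Hilbert system the lax `says` modality satisfies strength, so the
contract `A says ((B says b) → a)` yields the plain implication `B says b → A says a`.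
Then, inside `B says`, the contract `(A says a) ↠ b` can be weakened along `B says b → A says a`
and `b → B says b` to `(B says b) ↠ (B says b)`, which discharges itself by `(φ ↠ φ) → φ`.
So `B says B says b`, hence `B says b` and, by the first step, `A says a`.
-/

namespace Prov

variable {P At : Type} {Γ : Set (PCL P At)}

theorem imp_self (φ : PCL P At) : Prov Γ (.imp φ φ) :=
  ((s φ (.imp φ φ) φ).mp (k _ _)).mp (k _ _)

theorem imp_trans {φ ψ χ : PCL P At} (h₁ : Prov Γ (.imp φ ψ)) (h₂ : Prov Γ (.imp ψ χ)) :
    Prov Γ (.imp φ χ) :=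
  ((s φ ψ χ).mp ((k _ φ).mp h₂)).mp h₁

theorem deduction {χ φ : PCL P At} (h : Prov (insert χ Γ) φ) : Prov Γ (.imp χ φ) := by
  induction h with
  | ax hφ =>
    rcases Set.mem_insert_iff.mp hφ with rfl | hφ
    · exact imp_self _
    · exact (k _ χ).mp (ax hφ)
  | mp _ _ ih₁ ih₂ => exact ((s _ _ _).mp ih₁).mp ih₂
  | _ =>
    refine (k _ χ).mp ?_
    solve_by_elim only [k, s, andI, andE1, andE2, orI1, orI2, orE, topI, botE, ctop, cfix,
      cmono, saysI, saysIdem, saysMono]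

theorem says_bind (A : P) {φ ψ : PCL P At} (h : Prov Γ (.imp φ (.says A ψ))) :
    Prov Γ (.imp (.says A φ) (.says A ψ)) :=
  imp_trans ((saysMono A _ _).mp h) (saysIdem A ψ)

theorem says_k (A : P) (φ ψ : PCL P At) :
    Prov Γ (.imp (.says A (.imp φ ψ)) (.imp (.says A φ) (.says A ψ))) := by
  refine deduction (deduction ?_)
  refine (says_bind A (deduction ?_)).mp (ax (Set.mem_insert_of_mem _ (Set.mem_insert _ _)))
  exact ((saysMono A φ ψ).mp (ax (Set.mem_insert _ _))).mp
    (ax (Set.mem_insert_of_mem _ (Set.mem_insert _ _)))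

theorem imp_of_cimp {φ ψ χ : PCL P At} (hχφ : Prov Γ (.imp χ φ)) (hψχ : Prov Γ (.imp ψ χ)) :
    Prov Γ (.imp (.cimp φ ψ) χ) :=
  imp_trans (((s _ _ _).mp ((cmono φ χ ψ χ).mp hχφ)).mp ((k _ _).mp hψχ)) (cfix χ)

theorem says_and_says_of_contracts {A B : P} {φ ψ : PCL P At}
    (hA : Prov Γ (.says A (.imp (.says B ψ) φ))) (hB : Prov Γ (.says B (.cimp (.says A φ) ψ))) :
    Prov Γ (.and (.says A φ) (.says B ψ)) := by
  have hBA : Prov Γ (.imp (.says B ψ) (.says A φ)) :=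
    imp_trans (saysI A _) ((says_k A _ _).mp hA)
  have hBψ : Prov Γ (.says B ψ) := (says_bind B (imp_of_cimp hBA (saysI B ψ))).mp hB
  exact ((andI _ _).mp (hBA.mp hBψ)).mp hBψ

end Prov

/-- for the asymmetric pair c_A = A says ((B says b) → a) and
c_B = B says ((A says a) ↠ b), c_A ∧ c_B ⊢ (A says a) ∧ (B says b). -/
theorem stmt12 {P At : Type} (A B : P) (a b : At) :
    Prov ({PCL.and (.says A (.imp (.says B (.atom b)) (.atom a)))
                   (.says B (.cimp (.says A (.atom a)) (.atom b)))} : Set (PCL P At))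
      (.and (.says A (.atom a)) (.says B (.atom b))) :=
  Prov.says_and_says_of_contracts ((Prov.andE1 _ _).mp (.ax rfl)) ((Prov.andE2 _ _).mp (.ax rfl))
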